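/- Let V, W be finite-dimensional inner product spaces and A, B ∈ Lin(V, W) with rank(A) = rank(B) = r for all maps in a path-connected set S ⊆ Lin(V, W) of rank-r maps. Then the map A ↦ A† is continuous on the set {A ∈ Lin(V, W) : rank A = r}. -/

import Mathlib

open Module LinearMap Metric Filter Topology Polynomial

/-- Orthogonal projection onto a submodule, as an endomorphism. -/
noncomputable def orthProj {E : Type*} [NormedAddCommGroup E] [InnerProductSpace ℝ E]
    [FiniteDimensional ℝ E] (K : Submodule ℝ E) : E →L[ℝ] E :=
  K.subtypeL.comp (K.orthogonalProjectionOnto)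

/-- `X` is the Moore–Penrose pseudoinverse of `A`: `A X = Proj_{im A}`,
`X A = Proj_{im A*}`, together with the normalization `X Proj_{im A} = X`
(i.e. `X` vanishes on `(im A)ᗮ`), which pins `X` down uniquely. -/
def IsMP {V W : Type*} [NormedAddCommGroup V] [InnerProductSpace ℝ V] [FiniteDimensional ℝ V]
    [NormedAddCommGroup W] [InnerProductSpace ℝ W] [FiniteDimensional ℝ W]
    (A : V →L[ℝ] W) (X : W →L[ℝ] V) : Prop :=
  A ∘L X = orthProj (LinearMap.range (A : V →ₗ[ℝ] W)) ∧
  X ∘L A = orthProj (LinearMap.range (ContinuousLinearMap.adjoint A : W →ₗ[ℝ] V)) ∧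
  X ∘L orthProj (LinearMap.range (A : V →ₗ[ℝ] W)) = X


/-!
On maps of rank `r` the pseudoinverse is given by Decell's formula, an expression in `A`, `A*`
and the coefficients of the characteristic polynomial of `A A*`, all continuous in `A`. Its
only division is by the coefficient of `t ^ (dim W - r)`, which does not vanish on rank-`r` maps:
`A A*` is self-adjoint, hence semisimple, so `0` is a root of `det (t - A A*)` of multiplicity
exactly `dim ker (A A*) = dim W - r`. Writing `det (t - A A*) = t ^ (dim W - r) q(t)`,
Cayley–Hamilton makes `q(A A*)` vanish on `range (A A*) = range A`, and this is what turns the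
formula into a solution of the Penrose equations.
-/

open scoped InnerProduct

namespace Module.End

variable {K M : Type*} [Field K] [AddCommGroup M] [Module K M] {f : End K M}

theorem IsFinitelySemisimple.ker_pow_le_ker (hf : f.IsFinitelySemisimple) (n : ℕ) :
    LinearMap.ker (f ^ n) ≤ LinearMap.ker f := by
  intro v hv
  have hgen : v ∈ f.genEigenspace 0 n := by simpa [mem_genEigenspace_nat] using hv
  rw [← eigenspace_zero, ← hf.maxGenEigenspace_eq_eigenspace]
  exact f.genEigenspace_le_maximal 0 n hgen

variable [FiniteDimensional K M]

theorem IsFinitelySemisimple.rootMultiplicity_zero_charpoly (hf : f.IsFinitelySemisimple) :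
    f.charpoly.rootMultiplicity 0 = finrank K (LinearMap.ker f) := by
  rw [← LinearMap.finrank_maxGenEigenspace_eq, hf.maxGenEigenspace_eq_eigenspace, eigenspace_zero]

theorem IsFinitelySemisimple.exists_charpoly_eq_X_pow_mul (hf : f.IsFinitelySemisimple) :
    ∃ q : K[X], f.charpoly = X ^ finrank K (LinearMap.ker f) * q ∧ q.coeff 0 ≠ 0 := by
  obtain ⟨q, hq, hX⟩ := exists_eq_pow_rootMultiplicity_mul_and_not_dvd f.charpoly
    f.charpoly_monic.ne_zero 0
  rw [map_zero, sub_zero] at hq hX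
  rw [hf.rootMultiplicity_zero_charpoly] at hq
  exact ⟨q, hq, fun h => hX (X_dvd_iff.mpr h)⟩

/-- By Cayley–Hamilton `q f` maps into `ker (f ^ n) = ker f`, and it commutes with `f`. -/
theorem IsFinitelySemisimple.aeval_apply_eq_zero_of_mem_range (hf : f.IsFinitelySemisimple)
    {n : ℕ} {q : K[X]} (hq : f.charpoly = X ^ n * q) {v : M} (hv : v ∈ LinearMap.range f) :
    aeval f q v = 0 := by
  obtain ⟨u, rfl⟩ := hv
  have hu : aeval f q u ∈ LinearMap.ker (f ^ n) := by
    have h := aeval_self_charpoly f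
    rw [hq, map_mul, map_pow, aeval_X] at h
    exact LinearMap.congr_fun h u
  have hcomm : aeval f q * f = f * aeval f q := by
    simpa using congrArg (aeval f) (commute_X q).eq.symm
  rw [← Module.End.mul_apply, hcomm, Module.End.mul_apply]
  exact hf.ker_pow_le_ker n hu

end Module.End

theorem Polynomial.aeval_eq_mul_sum_add {R A : Type*} [CommSemiring R] [Semiring A] [Algebra R A]
    (p : R[X]) (x : A) :
    aeval x p = x * ∑ k ∈ Finset.range p.natDegree, p.coeff (k + 1) • x ^ k
      + algebraMap R A (p.coeff 0) := by
  rw [aeval_eq_sum_range, Finset.sum_range_succ', Finset.mul_sum, pow_zero, Algebra.smul_def,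
    mul_one]
  congr 1
  refine Finset.sum_congr rfl fun k _ => ?_
  rw [mul_smul_comm, pow_succ']

theorem Matrix.charpoly_coeff_eq_eval_univ_coeff {R n : Type*} [CommRing R] [Fintype n]
    [DecidableEq n] (M : Matrix n n R) (j : ℕ) :
    M.charpoly.coeff j =
      MvPolynomial.eval (fun ij => M ij.1 ij.2) ((charpoly.univ R n).coeff j) := by
  rw [MvPolynomial.eval, charpoly.univ_coeff_eval₂Hom]
  rfl

theorem LinearMap.continuous_charpoly_coeff {𝕜 E : Type*} [NontriviallyNormedField 𝕜]
    [CompleteSpace 𝕜] [NormedAddCommGroup E] [NormedSpace 𝕜 E] [FiniteDimensional 𝕜 E] (j : ℕ) :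
    Continuous fun f : E →L[𝕜] E => (f : E →ₗ[𝕜] E).charpoly.coeff j := by
  let b := Module.finBasis 𝕜 E
  have hmatrix : Continuous fun f : E →L[𝕜] E => LinearMap.toMatrix b b f :=
    ((LinearMap.toMatrix b b).toLinearMap ∘ₗ
      ContinuousLinearMap.coeLM 𝕜).continuous_of_finiteDimensional
  have huniv : ∀ f : E →L[𝕜] E, (f : E →ₗ[𝕜] E).charpoly.coeff j =
      MvPolynomial.eval (fun ij => LinearMap.toMatrix b b f ij.1 ij.2)
        ((Matrix.charpoly.univ 𝕜 _).coeff j) := fun f => by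
    rw [← charpoly_toMatrix _ b, Matrix.charpoly_coeff_eq_eval_univ_coeff]
  simp_rw [huniv]
  exact (MvPolynomial.continuous_eval _).comp
    (continuous_pi fun ij => hmatrix.matrix_elem ij.1 ij.2)

theorem Submodule.eq_starProjection_of_forall {𝕜 E : Type*} [RCLike 𝕜] [NormedAddCommGroup E]
    [InnerProductSpace 𝕜 E] {K : Submodule 𝕜 E} [K.HasOrthogonalProjection] {f : E →L[𝕜] E}
    (hK : ∀ v ∈ K, f v = v) (hKperp : ∀ v ∈ Kᗮ, f v = 0) : f = K.starProjection := by
  ext v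
  have hv : f v = f (K.starProjection v) + f (v - K.starProjection v) := by
    rw [← map_add, add_sub_cancel]
  rw [hv, hK _ (K.starProjection_apply_mem v), hKperp _ (K.sub_starProjection_mem_orthogonal v),
    add_zero]

theorem orthProj_eq_starProjection {E : Type*} [NormedAddCommGroup E] [InnerProductSpace ℝ E]
    [FiniteDimensional ℝ E] (K : Submodule ℝ E) : orthProj K = K.starProjection :=
  rfl

theorem orthProj_range_comp_self {V W : Type*} [NormedAddCommGroup V] [InnerProductSpace ℝ V]
    [NormedAddCommGroup W] [InnerProductSpace ℝ W] [FiniteDimensional ℝ W] (A : V →L[ℝ] W) :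
    orthProj (LinearMap.range (A : V →ₗ[ℝ] W)) ∘L A = A := by
  ext v
  exact Submodule.starProjection_eq_self_iff.mpr ⟨v, rfl⟩

namespace ContinuousLinearMap

variable {𝕜 V W : Type*} [RCLike 𝕜] [NormedAddCommGroup V] [InnerProductSpace 𝕜 V]
  [CompleteSpace V] [NormedAddCommGroup W] [InnerProductSpace 𝕜 W] [CompleteSpace W]

theorem isFinitelySemisimple_self_comp_adjoint (A : V →L[𝕜] W) :
    Module.End.IsFinitelySemisimple ((A ∘L A† : W →L[𝕜] W) : W →ₗ[𝕜] W) :=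
  (isPositive_self_comp_adjoint A).isSelfAdjoint.isSymmetric.isFinitelySemisimple

variable [FiniteDimensional 𝕜 V] [FiniteDimensional 𝕜 W]

theorem range_self_comp_adjoint (A : V →L[𝕜] W) :
    LinearMap.range ((A ∘L A† : W →L[𝕜] W) : W →ₗ[𝕜] W) = LinearMap.range (A : V →ₗ[𝕜] W) := by
  have h := LinearMap.range_self_comp_adjoint (A : V →ₗ[𝕜] W)
  rwa [adjoint_toLinearMap] at h

theorem exists_charpoly_self_comp_adjoint_eq (A : V →L[𝕜] W) :
    ∃ q : 𝕜[X], ((A ∘L A† : W →L[𝕜] W) : W →ₗ[𝕜] W).charpoly =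
        X ^ (finrank 𝕜 W - finrank 𝕜 (LinearMap.range (A : V →ₗ[𝕜] W))) * q ∧
      q.coeff 0 ≠ 0 ∧ q.natDegree = finrank 𝕜 (LinearMap.range (A : V →ₗ[𝕜] W)) := by
  obtain ⟨q, hq, hq0⟩ := (isFinitelySemisimple_self_comp_adjoint A).exists_charpoly_eq_X_pow_mul
  have hrank := Submodule.finrank_le (LinearMap.range (A : V →ₗ[𝕜] W))
  have hker : finrank 𝕜 (LinearMap.ker ((A ∘L A† : W →L[𝕜] W) : W →ₗ[𝕜] W)) =
      finrank 𝕜 W - finrank 𝕜 (LinearMap.range (A : V →ₗ[𝕜] W)) := by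
    have h := LinearMap.finrank_range_add_finrank_ker ((A ∘L A† : W →L[𝕜] W) : W →ₗ[𝕜] W)
    rw [range_self_comp_adjoint] at h
    omega
  rw [hker] at hq
  refine ⟨q, hq, hq0, ?_⟩
  have hdeg := congrArg natDegree hq
  rw [LinearMap.charpoly_natDegree,
    Polynomial.natDegree_X_pow_mul (hp := fun h => hq0 (by simp [h]))] at hdeg
  omega

theorem charpoly_self_comp_adjoint_coeff_ne_zero {A : V →L[𝕜] W} {r : ℕ}
    (hA : finrank 𝕜 (LinearMap.range (A : V →ₗ[𝕜] W)) = r) :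
    ((A ∘L A† : W →L[𝕜] W) : W →ₗ[𝕜] W).charpoly.coeff (finrank 𝕜 W - r) ≠ 0 := by
  obtain ⟨q, hq, hq0, -⟩ := exists_charpoly_self_comp_adjoint_eq A
  rw [hA] at hq
  rwa [hq, coeff_X_pow_mul', if_pos le_rfl, Nat.sub_self]

theorem self_comp_adjoint_comp_eq_starProjection {A : V →L[𝕜] W} {n : ℕ}
    {q : 𝕜[X]} (hq : ((A ∘L A† : W →L[𝕜] W) : W →ₗ[𝕜] W).charpoly = X ^ n * q)
    (hq0 : q.coeff 0 ≠ 0) :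
    A ∘L A† ∘L (-(q.coeff 0)⁻¹ • ∑ k ∈ Finset.range q.natDegree, q.coeff (k + 1) • (A ∘L A†) ^ k) =
      (LinearMap.range (A : V →ₗ[𝕜] W)).starProjection := by
  set S := A ∘L A†
  set T := ∑ k ∈ Finset.range q.natDegree, q.coeff (k + 1) • S ^ k
  have hST : ((S ∘L T : W →L[𝕜] W) : W →ₗ[𝕜] W) =
      aeval (S : W →ₗ[𝕜] W) q - algebraMap 𝕜 _ (q.coeff 0) := by
    rw [aeval_eq_mul_sum_add, add_sub_cancel_right]
    simp [T, toLinearMap_pow, Module.End.mul_eq_comp]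
  have happly : ∀ v, (A ∘L A† ∘L (-(q.coeff 0)⁻¹ • T)) v = -(q.coeff 0)⁻¹ • S (T v) :=
    fun v => by simp [S]
  refine Submodule.eq_starProjection_of_forall (fun v hv => ?_) (fun v hv => ?_)
  · have hqv : aeval (S : W →ₗ[𝕜] W) q v = 0 :=
      (isFinitelySemisimple_self_comp_adjoint A).aeval_apply_eq_zero_of_mem_range hq
        (by rwa [range_self_comp_adjoint])
    have hSTv : S (T v) = -(q.coeff 0 • v) := by
      simpa [hqv, Module.algebraMap_end_apply] using LinearMap.congr_fun hST v
    rw [happly, hSTv, smul_neg, neg_smul, neg_neg, smul_smul, inv_mul_cancel₀ hq0, one_smul]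
  · rw [orthogonal_range] at hv
    have hAv : (A†) v = 0 := hv
    have hcomm : Commute S T :=
      Commute.sum_right _ _ _ fun k _ => ((Commute.refl S).pow_right k).smul_right _
    rw [happly, ← mul_apply_eq_comp, hcomm.eq, mul_apply_eq_comp]
    simp [S, hAv]

end ContinuousLinearMap

section PseudoInverse

variable {V W : Type*} [NormedAddCommGroup V] [InnerProductSpace ℝ V] [FiniteDimensional ℝ V]
  [NormedAddCommGroup W] [InnerProductSpace ℝ W] [FiniteDimensional ℝ W]

theorem IsMP.unique {A : V →L[ℝ] W} {X₁ X₂ : W →L[ℝ] V} (h₁ : IsMP A X₁) (h₂ : IsMP A X₂) :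
    X₁ = X₂ := by
  obtain ⟨-, hX₁A, hX₁P⟩ := h₁
  obtain ⟨hAX₂, hX₂A, hX₂P⟩ := h₂
  calc X₁ = X₁ ∘L orthProj (LinearMap.range (A : V →ₗ[ℝ] W)) := hX₁P.symm
    _ = (X₁ ∘L A) ∘L X₂ := by rw [← hAX₂, ContinuousLinearMap.comp_assoc]
    _ = X₂ ∘L (A ∘L X₂) := by rw [hX₁A, ← hX₂A, ContinuousLinearMap.comp_assoc]
    _ = X₂ := by rw [hAX₂, hX₂P]

theorem isMP_adjoint_comp {A : V →L[ℝ] W} {Y : W →L[ℝ] W} (hY : IsSelfAdjoint Y)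
    (hAY : A ∘L A† ∘L Y = orthProj (LinearMap.range (A : V →ₗ[ℝ] W))) :
    IsMP A (A† ∘L Y) := by
  set X := A† ∘L Y
  have hXA : IsSelfAdjoint (X ∘L A) := hY.adjoint_conj A
  have hXAA : (X ∘L A) ∘L A† = A† := by
    calc (X ∘L A) ∘L A† = (A ∘L X ∘L A)† := by
          rw [ContinuousLinearMap.adjoint_comp, hXA.adjoint_eq]
      _ = A† := by rw [← ContinuousLinearMap.comp_assoc, hAY, orthProj_range_comp_self]
  have hfix : ∀ v ∈ LinearMap.range (A† : W →ₗ[ℝ] V), X (A v) = v := by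
    rintro _ ⟨w, rfl⟩
    exact congrArg (· w) hXAA
  refine ⟨hAY, ?_, ?_⟩
  · rw [orthProj_eq_starProjection]
    refine Submodule.eq_starProjection_of_forall hfix fun v hv => ?_
    rw [ContinuousLinearMap.orthogonal_range, ContinuousLinearMap.adjoint_adjoint] at hv
    have hAv : A v = 0 := hv
    rw [ContinuousLinearMap.comp_apply, hAv, map_zero]
  · rw [← hAY]
    ext w
    exact hfix (X w) ⟨Y w, rfl⟩

/-- Decell's formula `A† = -(1 / a_r) A* ∑_{i=1}^r a_{i-1} (A A*)^(r-i)`, where `a_i` is the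
coefficient of `t ^ (dim W - i)` in `det (t - A A*)`, reindexed by `k = r - i`. -/
noncomputable def decellPinv (r : ℕ) (A : V →L[ℝ] W) : W →L[ℝ] V :=
  -(((A ∘L A† : W →L[ℝ] W) : W →ₗ[ℝ] W).charpoly.coeff (finrank ℝ W - r))⁻¹ •
    (A† ∘L ∑ k ∈ Finset.range r,
      ((A ∘L A† : W →L[ℝ] W) : W →ₗ[ℝ] W).charpoly.coeff (finrank ℝ W - r + (k + 1)) •
        (A ∘L A†) ^ k)

theorem continuousOn_decellPinv (r : ℕ) :
    ContinuousOn (decellPinv (V := V) (W := W) r)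
      {A | ((A ∘L A† : W →L[ℝ] W) : W →ₗ[ℝ] W).charpoly.coeff (finrank ℝ W - r) ≠ 0} := by
  have hadj : Continuous fun A : V →L[ℝ] W => A† :=
    (ContinuousLinearMap.adjoint (𝕜 := ℝ) (E := V) (F := W)).continuous
  have hgram : Continuous fun A : V →L[ℝ] W => A ∘L A† := continuous_id.clm_comp hadj
  have hcoeff (j : ℕ) :
      Continuous fun A : V →L[ℝ] W => ((A ∘L A† : W →L[ℝ] W) : W →ₗ[ℝ] W).charpoly.coeff j :=
    (continuous_charpoly_coeff j).comp hgram
  refine ((hcoeff _).continuousOn.inv₀ fun A hA => hA).neg.smul (hadj.clm_comp ?_).continuousOn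
  exact continuous_finsetSum _ fun k _ => (hcoeff _).smul (hgram.pow k)

theorem isMP_decellPinv {r : ℕ} {A : V →L[ℝ] W}
    (hA : finrank ℝ (LinearMap.range (A : V →ₗ[ℝ] W)) = r) : IsMP A (decellPinv r A) := by
  obtain ⟨q, hq, hq0, hdeg⟩ := ContinuousLinearMap.exists_charpoly_self_comp_adjoint_eq A
  rw [hA] at hq hdeg
  have hcoeff (j : ℕ) :
      ((A ∘L A† : W →L[ℝ] W) : W →ₗ[ℝ] W).charpoly.coeff (finrank ℝ W - r + j) = q.coeff j := by
    rw [hq, mul_comm, add_comm, coeff_mul_X_pow]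
  have hcoeff0 := hcoeff 0
  rw [add_zero] at hcoeff0
  have hdecell : decellPinv r A = A† ∘L (-(q.coeff 0)⁻¹ •
      ∑ k ∈ Finset.range q.natDegree, q.coeff (k + 1) • (A ∘L A†) ^ k) := by
    rw [decellPinv, hcoeff0, hdeg, ContinuousLinearMap.comp_smul]
    simp only [hcoeff]
  have hgram : IsSelfAdjoint (A ∘L A†) :=
    (ContinuousLinearMap.isPositive_self_comp_adjoint A).isSelfAdjoint
  rw [hdecell]
  refine isMP_adjoint_comp ?_
    (ContinuousLinearMap.self_comp_adjoint_comp_eq_starProjection hq hq0)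
  exact .smul (.all _) (isSelfAdjoint_sum _ fun k _ => .smul (.all _) (hgram.pow k))

end PseudoInverse

/-- The Moore–Penrose pseudoinverse is continuous on the set of maps of fixed rank `r`. -/
theorem pseudoinverse_continuousOn_fixed_rank
    {V W : Type*} [NormedAddCommGroup V] [InnerProductSpace ℝ V] [FiniteDimensional ℝ V]
    [NormedAddCommGroup W] [InnerProductSpace ℝ W] [FiniteDimensional ℝ W]
    (r : ℕ) (dag : (V →L[ℝ] W) → (W →L[ℝ] V))
    (hdag : ∀ A : V →L[ℝ] W, finrank ℝ (LinearMap.range (A : V →ₗ[ℝ] W)) = r → IsMP A (dag A)) :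
    ContinuousOn dag {A : V →L[ℝ] W | finrank ℝ (LinearMap.range (A : V →ₗ[ℝ] W)) = r} := by
  refine ((continuousOn_decellPinv r).mono fun A hA =>
    ContinuousLinearMap.charpoly_self_comp_adjoint_coeff_ne_zero hA).congr fun A hA => ?_
  exact (hdag A hA).unique (isMP_decellPinv hA)
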